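/- Fix a unit vector l ∈ ℝ^d and let k, k' be real numbers with 0 < k' < k. Then limsup_{n→∞} (1/n) log ℙ(T_{nk} ≤ n) ≤ limsup_{n→∞} (1/n) log ℙ(T_{nk'} ≤ n, T_{nk'} ≤ D_1), and liminf_{n→∞} (1/n) log ℙ(T_{nk} ≤ n, T_{nk} ≤ D_1) ≤ liminf_{n→∞} (1/n) log ℙ(T_{nk} ≤ n). -/

import Mathlib

open MeasureTheory ProbabilityTheory Filter
open scoped ENNReal

noncomputable section

/-- The natural embedding of the lattice `ℤ^d` into Euclidean space `ℝ^d`. -/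
def emb (d : ℕ) (z : Fin d → ℤ) : EuclideanSpace ℝ (Fin d) := WithLp.toLp 2 (fun i => (z i : ℝ))

/-- A finite family `u 0, …, u (m-1)` of lattice vectors is *nice* if for every nonzero
direction `l ∈ ℝ^d` there is some `i` with `l · u i > 0`. -/
def IsNice (d m : ℕ) (u : Fin m → Fin d → ℤ) : Prop :=
  ∀ l : EuclideanSpace ℝ (Fin d), l ≠ 0 → ∃ i : Fin m, 0 < (inner ℝ l (emb d (u i)) : ℝ)

/-- A stationary `ℤ^d`-valued random field `η` on a probability space `(Ω, P)`, with bounded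
steps (i), finite-range dependence of range `M` (ii), and the ellipticity condition (iii)
with respect to a nice set of vectors `u 0, …, u (m-1)`. -/
structure DWRE (d : ℕ) (Ω : Type) [MeasurableSpace Ω] where
  P : Measure Ω
  isProb : IsProbabilityMeasure P
  η : (Fin d → ℤ) → Ω → (Fin d → ℤ)
  meas_η : ∀ z, Measurable (η z)
  stationary : ∀ y : Fin d → ℤ,
    Measure.map (fun ω => fun z => η (z + y) ω) P = Measure.map (fun ω => fun z => η z ω) P
  L : ℝ
  L_pos : 0 < L
  bounded : ∀ z : Fin d → ℤ, ∀ᵐ ω ∂P, ‖emb d (η z ω)‖ ≤ L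
  M : ℝ
  M_pos : 0 < M
  finiteRange : ∀ z : Fin d → ℤ,
    Indep (MeasurableSpace.comap (η z) inferInstance)
      (⨆ w ∈ {w : Fin d → ℤ | M < dist (emb d w) (emb d z)},
        MeasurableSpace.comap (η w) inferInstance) P
  m : ℕ
  u : Fin m → Fin d → ℤ
  nice : IsNice d m u
  c : ℝ
  c_pos : 0 < c
  ellipticity : ∀ (z : Fin d → ℤ) (i : Fin m), ∀ᵐ ω ∂P,
    c < condExp
      (⨆ w ∈ {w : Fin d → ℤ | w ≠ z ∧ dist (emb d w) (emb d z) ≤ M},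
        MeasurableSpace.comap (η w) inferInstance) P
      (Set.indicator {ω' | η z ω' = u i} (fun _ => (1 : ℝ))) ω

attribute [instance] DWRE.isProb

namespace DWRE

variable {d : ℕ} {Ω : Type} [MeasurableSpace Ω]

/-- The deterministic walk in the random environment: `X 0 = 0`, `X (n+1) = X n + η (X n)`. -/
def walk (E : DWRE d Ω) : ℕ → Ω → Fin d → ℤ
  | 0, _ => 0
  | n + 1, ω => walk E n ω + E.η (walk E n ω) ω

/-- The σ-algebra generated by the variables `η z` for `z ∉ S` within distance `M` of `S`. -/
def Fnear (E : DWRE d Ω) (S : Set (Fin d → ℤ)) : MeasurableSpace Ω :=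
  ⨆ w ∈ {w : Fin d → ℤ | w ∉ S ∧ ∃ y ∈ S, dist (emb d w) (emb d y) ≤ E.M},
    MeasurableSpace.comap (E.η w) inferInstance

/-- The hitting time `T_u = inf {n : X n · l ≥ u}` (with value `⊤` if there is no such `n`). -/
def hitT (E : DWRE d Ω) (l : EuclideanSpace ℝ (Fin d)) (u : ℝ) (ω : Ω) : ℕ∞ :=
  sInf {t : ℕ∞ | ∃ n : ℕ, t = (n : ℕ∞) ∧ u ≤ (inner ℝ l (emb d (E.walk n ω)) : ℝ)}

/-- `D_1`, the time of the first jump of the walk over the hyperplane through the origin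
orthogonal to `l`, in the direction of `l`. -/
def D1 (E : DWRE d Ω) (l : EuclideanSpace ℝ (Fin d)) (ω : Ω) : ℕ∞ :=
  sInf {t : ℕ∞ | ∃ n : ℕ, t = (n : ℕ∞) ∧ 1 ≤ n ∧
    (inner ℝ l (emb d (E.walk (n - 1) ω)) : ℝ) < 0 ∧ 0 ≤ (inner ℝ l (emb d (E.walk n ω)) : ℝ)}

/-- `log ℙ(A)`, with `log 0 = -∞`, as an extended real number. -/
def plog (E : DWRE d Ω) (A : Set Ω) : EReal := ENNReal.log (E.P A)

/-- The sequence `n ↦ (1/n) log ℙ(A n)`, as extended real numbers. -/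
def rate (E : DWRE d Ω) (A : ℕ → Set Ω) (n : ℕ) : EReal :=
  (((n : ℝ)⁻¹ : ℝ) : EReal) * E.plog (A n)

/-- `T ≤ x` for an extended natural time `T` and a real bound `x` (in particular `T < ∞`). -/
def timeLE (t : ℕ∞) (x : ℝ) : Prop := ∃ n : ℕ, t = (n : ℕ∞) ∧ (n : ℝ) ≤ x

/-- The sequence `n ↦ (1/n) log 𝔼[exp (λ · X n)]`. -/
def mgfRate (E : DWRE d Ω) (lam : EuclideanSpace ℝ (Fin d)) (n : ℕ) : EReal :=
  (((n : ℝ)⁻¹ * Real.log (∫ ω, Real.exp ((inner ℝ lam (emb d (E.walk n ω)) : ℝ)) ∂E.P) : ℝ) : EReal)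

/-- Convexity for `EReal`-valued functions on `ℝ^d`. -/
def ConvexE {d : ℕ} (f : EuclideanSpace ℝ (Fin d) → EReal) : Prop :=
  ∀ x y : EuclideanSpace ℝ (Fin d), ∀ a b : ℝ, 0 ≤ a → 0 ≤ b → a + b = 1 →
    f (a • x + b • y) ≤ (a : EReal) * f x + (b : EReal) * f y

/-- Concavity for `EReal`-valued functions on `(0, ∞)`. -/
def ConcavePosE (γ : ℝ → EReal) : Prop :=
  ∀ k₁ k₂ : ℝ, 0 < k₁ → 0 < k₂ → ∀ a b : ℝ, 0 ≤ a → 0 ≤ b → a + b = 1 →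
    (a : EReal) * γ k₁ + (b : EReal) * γ k₂ ≤ γ (a * k₁ + b * k₂)

/-- The convex conjugate `Λ*(x) = sup_λ (λ·x − Λ(λ))` of an `EReal`-valued function on `ℝ^d`. -/
def conj {d : ℕ} (Λ : EuclideanSpace ℝ (Fin d) → EReal) (x : EuclideanSpace ℝ (Fin d)) : EReal :=
  ⨆ lam : EuclideanSpace ℝ (Fin d), (((inner ℝ lam x : ℝ)) : EReal) - Λ lam

end DWRE

open DWRE

variable {d : ℕ} {Ω : Type} [MeasurableSpace Ω]

/-!
Up to a null set every jump has coordinates bounded by `N = ⌊L⌋`. If the walk reaches height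
`n k` by time `n`, restart it at the lowest point `x` (in the direction `l`) that it visits
before doing so: seen from `x`, the walk climbs at least `n k ≥ n k'` by time `n` without ever
going below its starting level, hence before its first jump over the hyperplane. The point `x`
lies in a cube of `(2 n N + 1)^d` lattice points, and by stationarity the environment seen from
any fixed `x` has the law of the original one, so the union bound gives
`ℙ(T_{nk} ≤ n) ≤ (2 n N + 1)^d ℙ(T_{nk'} ≤ n, T_{nk'} ≤ D_1)`; the polynomial factor is
invisible on the exponential scale. The `liminf` inequality is monotonicity of `ℙ`.
-/

open scoped Topology

def firstHit (f : ℕ → ℝ) (u : ℝ) : ℕ∞ :=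
  sInf {t : ℕ∞ | ∃ n : ℕ, t = n ∧ u ≤ f n}

def firstUpcross (f : ℕ → ℝ) : ℕ∞ :=
  sInf {t : ℕ∞ | ∃ n : ℕ, t = n ∧ 1 ≤ n ∧ f (n - 1) < 0 ∧ 0 ≤ f n}

section Sequences

variable {f : ℕ → ℝ} {u : ℝ}

lemma firstHit_le_of_le {n : ℕ} (h : u ≤ f n) : firstHit f u ≤ n := sInf_le ⟨n, rfl, h⟩

lemma firstHit_le_coe_iff {n : ℕ} : firstHit f u ≤ n ↔ ∃ m ≤ n, u ≤ f m := by
  constructor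
  · intro h
    have hne : {t : ℕ∞ | ∃ m : ℕ, t = m ∧ u ≤ f m}.Nonempty := by
      by_contra hempty
      rw [Set.not_nonempty_iff_eq_empty] at hempty
      rw [firstHit, hempty, sInf_empty, top_le_iff] at h
      exact ENat.natCast_ne_top n h
    obtain ⟨m, hm, hum⟩ := csInf_mem hne
    exact ⟨m, by rw [firstHit, hm] at h; exact_mod_cast h, hum⟩
  · rintro ⟨m, hmn, hum⟩
    exact (firstHit_le_of_le hum).trans (by exact_mod_cast hmn)

lemma firstHit_le_firstUpcross_iff :
    firstHit f u ≤ firstUpcross f ↔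
      ∀ n : ℕ, 1 ≤ n → f (n - 1) < 0 → 0 ≤ f n → firstHit f u ≤ n := by
  simp only [firstUpcross, le_sInf_iff, Set.mem_ofPred_eq]
  constructor
  · exact fun h n h1 hneg hnn => h n ⟨n, rfl, h1, hneg, hnn⟩
  · rintro h _ ⟨n, rfl, h1, hneg, hnn⟩
    exact h n h1 hneg hnn

lemma firstHit_le_firstUpcross_of_nonneg {T : ℕ} (hu : u ≤ f T) (hf : ∀ s ≤ T, 0 ≤ f s) :
    firstHit f u ≤ firstUpcross f := by
  refine firstHit_le_firstUpcross_iff.2 fun n _ hneg _ => ?_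
  have hTn : T < n - 1 := lt_of_not_ge fun h => (hf _ h).not_gt hneg
  exact (firstHit_le_of_le hu).trans (by exact_mod_cast (by omega : T ≤ n))

/-- `σ` is the time of the minimum of `f` on `[0, T]`. -/
lemma exists_restart_firstHit_le_firstUpcross {T n : ℕ} (hTn : T ≤ n) (hu : u ≤ f T - f 0) :
    ∃ σ ≤ T, firstHit (fun s => f (σ + s) - f σ) u ≤ n ∧
      firstHit (fun s => f (σ + s) - f σ) u ≤ firstUpcross (fun s => f (σ + s) - f σ) := by
  obtain ⟨σ, hσT, hσmin⟩ := Finset.exists_min_image (Finset.range (T + 1)) f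
    ⟨0, Finset.mem_range.2 (Nat.succ_pos T)⟩
  rw [Finset.mem_range, Nat.lt_succ_iff] at hσT
  have hmin : ∀ s ≤ T, f σ ≤ f s := fun s hs => hσmin s (Finset.mem_range.2 (by omega))
  have hclimb : u ≤ f (σ + (T - σ)) - f σ := by
    rw [Nat.add_sub_cancel' hσT]
    linarith [hmin 0 (Nat.zero_le T)]
  refine ⟨σ, hσT, firstHit_le_coe_iff.2 ⟨T - σ, by omega, hclimb⟩,
    firstHit_le_firstUpcross_of_nonneg hclimb fun s hs => ?_⟩
  linarith [hmin (σ + s) (by omega)]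

variable {α : Type*} [MeasurableSpace α] {g : α → ℕ → ℝ}

lemma measurableSet_firstHit_le (hg : ∀ n, Measurable fun a => g a n) (n : ℕ) :
    MeasurableSet {a | firstHit (g a) u ≤ n} := by
  simp only [firstHit_le_coe_iff, Set.ofPred_exists]
  exact .iUnion fun m =>
    (MeasurableSet.const (m ≤ n)).inter (measurableSet_le measurable_const (hg m))

lemma measurableSet_firstHit_le_firstUpcross (hg : ∀ n, Measurable fun a => g a n) :
    MeasurableSet {a | firstHit (g a) u ≤ firstUpcross (g a)} := by
  simp only [firstHit_le_firstUpcross_iff, Set.ofPred_forall]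
  exact .iInter fun n => .iInter fun _ =>
    (measurableSet_lt (hg (n - 1)) measurable_const).imp <|
      (measurableSet_le measurable_const (hg n)).imp (measurableSet_firstHit_le hg n)

end Sequences

lemma emb_sub (a b : Fin d → ℤ) : emb d (a - b) = emb d a - emb d b := by
  ext i; simp [emb]

lemma emb_zero : emb d 0 = 0 := by
  ext i; simp [emb]

lemma abs_le_floor_of_norm_emb_le {z : Fin d → ℤ} {L : ℝ} (h : ‖emb d z‖ ≤ L) (i : Fin d) :
    |z i| ≤ ⌊L⌋₊ := by
  have hzi : (|z i| : ℝ) ≤ L := by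
    simpa [emb] using (PiLp.norm_apply_le (emb d z) i).trans h
  have hfloor := Nat.le_floor (a := L) (n := (z i).natAbs) (by simpa using hzi)
  rw [Int.abs_eq_natAbs]
  exact_mod_cast hfloor

def box (d r : ℕ) : Finset (Fin d → ℤ) :=
  Finset.Icc (fun _ => -(r : ℤ)) (fun _ => (r : ℤ))

lemma mem_box {r : ℕ} {x : Fin d → ℤ} : x ∈ box d r ↔ ∀ i, |x i| ≤ r := by
  simp only [box, Finset.mem_Icc, Pi.le_def, abs_le]
  exact ⟨fun h i => ⟨h.1 i, h.2 i⟩, fun h => ⟨fun i => (h i).1, fun i => (h i).2⟩⟩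

lemma card_box (d r : ℕ) : (box d r).card = (2 * r + 1) ^ d := by
  rw [box, Pi.card_Icc, Finset.prod_const, Finset.card_univ, Fintype.card_fin, Int.card_Icc]
  congr 1
  omega

lemma tendsto_inv_mul_log_pow_linear {a : ℝ} (ha : 0 ≤ a) (m : ℕ) :
    Tendsto (fun n : ℕ => (n : ℝ)⁻¹ * Real.log ((a * n + 1) ^ m)) atTop (𝓝 0) := by
  suffices Tendsto (fun n : ℕ => Real.log (a * n + 1) / n) atTop (𝓝 0) by
    simpa [Real.log_pow, div_eq_inv_mul, mul_left_comm] using this.const_mul (m : ℝ)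
  rcases ha.eq_or_lt with rfl | ha
  · simp
  have hlin : Tendsto (fun n : ℕ => a * n + 1) atTop atTop :=
    tendsto_atTop_add_const_right _ 1 <|
      (tendsto_natCast_atTop_atTop (R := ℝ)).const_mul_atTop ha
  refine ((Real.tendsto_pow_log_div_mul_add_atTop a⁻¹ (-a⁻¹) 1 (inv_ne_zero ha.ne')).comp
    hlin).congr fun n => ?_
  simp only [Function.comp_apply, pow_one]
  congr 1
  field_simp
  ring_nf

/-- A realisation `z ↦ η z ω` of the jump field. -/
abbrev Environment (d : ℕ) := (Fin d → ℤ) → Fin d → ℤ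

namespace Environment

variable (e : Environment d)

def walk (n : ℕ) : Fin d → ℤ := (fun x => x + e x)^[n] 0

def shift (x : Fin d → ℤ) : Environment d := fun z => e (z + x)

def height (l : EuclideanSpace ℝ (Fin d)) (n : ℕ) : ℝ := inner ℝ l (emb d (e.walk n))

lemma walk_zero : e.walk 0 = 0 := rfl

lemma walk_succ (n : ℕ) : e.walk (n + 1) = e.walk n + e (e.walk n) :=
  Function.iterate_succ_apply' _ _ _

lemma walk_shift_walk (σ s : ℕ) :
    (e.shift (e.walk σ)).walk s = e.walk (σ + s) - e.walk σ := by
  have hconj : Function.Semiconj (· + e.walk σ) (fun z => z + e.shift (e.walk σ) z)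
      (fun z => z + e z) := fun z => by simp only [shift]; abel
  have hiter := hconj.iterate_right s 0
  simp only [zero_add] at hiter
  rw [eq_sub_iff_add_eq, walk, hiter, walk, walk, ← Function.iterate_add_apply, add_comm]

lemma height_zero (l : EuclideanSpace ℝ (Fin d)) : e.height l 0 = 0 := by
  rw [height, walk_zero, emb_zero, inner_zero_right]

lemma height_shift_walk (l : EuclideanSpace ℝ (Fin d)) (σ s : ℕ) :
    (e.shift (e.walk σ)).height l s = e.height l (σ + s) - e.height l σ := by
  rw [height, walk_shift_walk, emb_sub, inner_sub_right, height, height]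

lemma abs_walk_apply_le {N : ℕ} (hN : ∀ z i, |e z i| ≤ N) (n : ℕ) (i : Fin d) :
    |e.walk n i| ≤ n * N := by
  induction n with
  | zero => simp [walk_zero]
  | succ n ih =>
    rw [walk_succ, Pi.add_apply, Nat.cast_succ, add_one_mul]
    exact (abs_add_le _ _).trans (add_le_add ih (hN _ i))

lemma measurable_walk (n : ℕ) : Measurable fun e : Environment d => e.walk n := by
  induction n with
  | zero => exact measurable_const
  | succ n ih =>
    simp only [walk_succ]
    have hstep : Measurable fun p : Environment d × (Fin d → ℤ) => p.2 + p.1 p.2 :=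
      measurable_from_prod_countable_left fun z => measurable_const.add (measurable_pi_apply z)
    exact hstep.comp (measurable_id.prodMk ih)

lemma measurable_height (l : EuclideanSpace ℝ (Fin d)) (n : ℕ) :
    Measurable fun e : Environment d => e.height l n :=
  (measurable_of_countable fun x => inner ℝ l (emb d x)).comp (measurable_walk n)

def NoBacktrackHit (l : EuclideanSpace ℝ (Fin d)) (u : ℝ) (n : ℕ) : Set (Environment d) :=
  {e | firstHit (e.height l) u ≤ n ∧ firstHit (e.height l) u ≤ firstUpcross (e.height l)}

lemma measurableSet_noBacktrackHit (l : EuclideanSpace ℝ (Fin d)) (u : ℝ) (n : ℕ) :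
    MeasurableSet (NoBacktrackHit l u n) :=
  (measurableSet_firstHit_le (measurable_height l) n).inter
    (measurableSet_firstHit_le_firstUpcross (measurable_height l))

/-- `x` is the lowest point, in the direction `l`, that the walk visits before reaching
height `u`. -/
lemma exists_shift_mem_noBacktrackHit {l : EuclideanSpace ℝ (Fin d)} {N n : ℕ}
    (hN : ∀ z i, |e z i| ≤ N) {u u' : ℝ} (hu : u' ≤ u) (h : firstHit (e.height l) u ≤ n) :
    ∃ x ∈ box d (n * N), e.shift x ∈ NoBacktrackHit l u' n := by
  obtain ⟨T, hTn, hT⟩ := firstHit_le_coe_iff.1 h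
  have hclimb : u' ≤ e.height l T - e.height l 0 := by
    rw [height_zero, sub_zero]
    exact hu.trans hT
  obtain ⟨σ, hσT, hσ⟩ := exists_restart_firstHit_le_firstUpcross hTn hclimb
  refine ⟨e.walk σ, mem_box.2 fun i => ?_, ?_⟩
  · refine (e.abs_walk_apply_le hN σ i).trans ?_
    exact_mod_cast Nat.mul_le_mul_right N (hσT.trans hTn)
  · rwa [NoBacktrackHit, Set.mem_ofPred_eq, funext (e.height_shift_walk l σ)]

end Environment

namespace DWRE

variable (E : DWRE d Ω)

def env (ω : Ω) : Environment d := fun z => E.η z ω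

lemma walk_eq_env_walk (n : ℕ) (ω : Ω) : E.walk n ω = (E.env ω).walk n := by
  induction n with
  | zero => rfl
  | succ n ih => rw [walk, ih, Environment.walk_succ, env]

lemma hitT_eq_firstHit (l : EuclideanSpace ℝ (Fin d)) (u : ℝ) (ω : Ω) :
    E.hitT l u ω = firstHit ((E.env ω).height l) u := by
  simp only [hitT, firstHit, Environment.height, walk_eq_env_walk]

lemma D1_eq_firstUpcross (l : EuclideanSpace ℝ (Fin d)) (ω : Ω) :
    E.D1 l ω = firstUpcross ((E.env ω).height l) := by
  simp only [D1, firstUpcross, Environment.height, walk_eq_env_walk]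

lemma measurable_env : Measurable E.env :=
  measurable_pi_lambda _ E.meas_η

lemma measure_shift_env_preimage (x : Fin d → ℤ) {A : Set (Environment d)}
    (hA : MeasurableSet A) :
    E.P ((fun ω => (E.env ω).shift x) ⁻¹' A) = E.P (E.env ⁻¹' A) := by
  have hshift : Measurable fun ω => (E.env ω).shift x :=
    measurable_pi_lambda _ fun z => E.meas_η (z + x)
  rw [← Measure.map_apply hshift hA, ← Measure.map_apply E.measurable_env hA]
  exact congrArg (· A) (E.stationary x)

lemma ae_abs_η_le : ∀ᵐ ω ∂E.P, ∀ z i, |E.η z ω i| ≤ ⌊E.L⌋₊ := by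
  filter_upwards [ae_all_iff.2 E.bounded] with ω hω z i
  exact abs_le_floor_of_norm_emb_le (hω z) i

/-- Union bound over the possible lowest points of the walk, each of which contributes the same
probability by stationarity. -/
lemma measure_hitT_le_le_mul {l : EuclideanSpace ℝ (Fin d)} {k k' : ℝ} (hk : k' ≤ k) (n : ℕ) :
    E.P {ω | E.hitT l (n * k) ω ≤ n} ≤
      ((2 * (n * ⌊E.L⌋₊) + 1) ^ d : ℕ) *
        E.P {ω | E.hitT l (n * k') ω ≤ n ∧ E.hitT l (n * k') ω ≤ E.D1 l ω} := by
  set A := Environment.NoBacktrackHit l (n * k') n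
  have hA := Environment.measurableSet_noBacktrackHit l (n * k') n
  have hcover : {ω | E.hitT l (n * k) ω ≤ n} ≤ᵐ[E.P]
      ⋃ x ∈ box d (n * ⌊E.L⌋₊), (fun ω => (E.env ω).shift x) ⁻¹' A := by
    filter_upwards [E.ae_abs_η_le] with ω hω hhit
    change E.hitT l (n * k) ω ≤ n at hhit
    rw [hitT_eq_firstHit] at hhit
    obtain ⟨x, hx, hxA⟩ := (E.env ω).exists_shift_mem_noBacktrackHit hω
      (mul_le_mul_of_nonneg_left hk n.cast_nonneg) hhit
    exact Set.mem_iUnion₂.2 ⟨x, hx, hxA⟩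
  have hA_eq : E.env ⁻¹' A =
      {ω | E.hitT l (n * k') ω ≤ n ∧ E.hitT l (n * k') ω ≤ E.D1 l ω} := by
    ext ω
    simp only [Set.mem_preimage, A, Environment.NoBacktrackHit, Set.mem_ofPred_eq,
      hitT_eq_firstHit, D1_eq_firstUpcross]
  calc E.P {ω | E.hitT l (n * k) ω ≤ n}
      ≤ E.P (⋃ x ∈ box d (n * ⌊E.L⌋₊), (fun ω => (E.env ω).shift x) ⁻¹' A) :=
        measure_mono_ae hcover
    _ ≤ ∑ x ∈ box d (n * ⌊E.L⌋₊), E.P ((fun ω => (E.env ω).shift x) ⁻¹' A) :=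
        measure_biUnion_finset_le _ _
    _ = (box d (n * ⌊E.L⌋₊)).card * E.P (E.env ⁻¹' A) := by
        rw [Finset.sum_congr rfl fun x _ => E.measure_shift_env_preimage x hA, Finset.sum_const,
          nsmul_eq_mul]
    _ = _ := by rw [card_box, hA_eq]

lemma rate_mono {A B : ℕ → Set Ω} (h : ∀ n, A n ⊆ B n) (n : ℕ) : E.rate A n ≤ E.rate B n :=
  mul_le_mul_of_nonneg_left (ENNReal.log_monotone (measure_mono (h n)))
    (EReal.coe_nonneg.2 (inv_nonneg.2 n.cast_nonneg))

lemma rate_le_of_measure_le_mul {A B : ℕ → Set Ω} {n c : ℕ} (hc : c ≠ 0)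
    (h : E.P (A n) ≤ c * E.P (B n)) :
    E.rate A n ≤ (((n : ℝ)⁻¹ * Real.log c : ℝ) : EReal) + E.rate B n := by
  have hn : (0 : EReal) ≤ ((n : ℝ)⁻¹ : ℝ) := EReal.coe_nonneg.2 (inv_nonneg.2 n.cast_nonneg)
  have hlog : ENNReal.log c = (Real.log c : EReal) := by
    rw [ENNReal.log_pos_real (by exact_mod_cast hc) (ENNReal.natCast_ne_top c),
      ENNReal.toReal_natCast]
  calc E.rate A n ≤ (((n : ℝ)⁻¹ : ℝ) : EReal) * (ENNReal.log c + E.plog (B n)) := by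
        refine mul_le_mul_of_nonneg_left ?_ hn
        show ENNReal.log _ ≤ ENNReal.log _ + ENNReal.log _
        rw [← ENNReal.log_mul_add]
        exact ENNReal.log_monotone h
    _ = _ := by
        rw [EReal.left_distrib_of_nonneg_of_ne_top hn (EReal.coe_ne_top _), hlog,
          ← EReal.coe_mul, rate]

lemma limsup_rate_le_of_measure_le_mul {A B : ℕ → Set Ω} {c : ℕ → ℕ} (hc : ∀ n, c n ≠ 0)
    (h : ∀ n, E.P (A n) ≤ c n * E.P (B n))
    (hlim : Tendsto (fun n : ℕ => (n : ℝ)⁻¹ * Real.log (c n)) atTop (𝓝 0)) :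
    limsup (E.rate A) atTop ≤ limsup (E.rate B) atTop := by
  set ε : ℕ → EReal := fun n => (((n : ℝ)⁻¹ * Real.log (c n) : ℝ) : EReal)
  have hε : limsup ε atTop = 0 := (EReal.tendsto_coe.2 hlim).limsup_eq
  calc limsup (E.rate A) atTop ≤ limsup (ε + E.rate B) atTop :=
        limsup_le_limsup (.of_forall fun n => E.rate_le_of_measure_le_mul (hc n) (h n))
    _ ≤ limsup ε atTop + limsup (E.rate B) atTop :=
        EReal.limsup_add_le (.inl (by simp [hε])) (.inl (by simp [hε]))
    _ = limsup (E.rate B) atTop := by rw [hε, zero_add]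

end DWRE

theorem rate_comparison_no_backtrack_general (E : DWRE d Ω)
    (l : EuclideanSpace ℝ (Fin d)) (k k' : ℝ) (hkk : k' < k) :
    (Filter.limsup
        (E.rate fun n => {ω | E.hitT l ((n : ℝ) * k) ω ≤ (n : ℕ∞)}) Filter.atTop ≤
      Filter.limsup
        (E.rate fun n => {ω | E.hitT l ((n : ℝ) * k') ω ≤ (n : ℕ∞) ∧
          E.hitT l ((n : ℝ) * k') ω ≤ E.D1 l ω}) Filter.atTop) ∧
    Filter.liminf
        (E.rate fun n => {ω | E.hitT l ((n : ℝ) * k) ω ≤ (n : ℕ∞) ∧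
          E.hitT l ((n : ℝ) * k) ω ≤ E.D1 l ω}) Filter.atTop ≤
      Filter.liminf
        (E.rate fun n => {ω | E.hitT l ((n : ℝ) * k) ω ≤ (n : ℕ∞)}) Filter.atTop := by
  have hcard := tendsto_inv_mul_log_pow_linear (a := 2 * ⌊E.L⌋₊) (by positivity) d
  refine ⟨E.limsup_rate_le_of_measure_le_mul (fun n => by positivity)
    (E.measure_hitT_le_le_mul hkk.le) (hcard.congr fun n => ?_),
    liminf_le_liminf (.of_forall (E.rate_mono fun _ _ hω => hω.1))⟩
  push_cast
  ring_nf

/-- Lemma `second_lemma`: comparison of the rates of `{T_{nk} ≤ n}` with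
the rates of the no-backtracking events `{T_{nk'} ≤ n, T_{nk'} ≤ D_1}`. -/
theorem rate_comparison_no_backtrack (hd : 0 < d) (E : DWRE d Ω)
    (l : EuclideanSpace ℝ (Fin d)) (hl : ‖l‖ = 1) (k k' : ℝ) (hk' : 0 < k') (hkk : k' < k) :
    (Filter.limsup
        (E.rate fun n => {ω | E.hitT l ((n : ℝ) * k) ω ≤ (n : ℕ∞)}) Filter.atTop ≤
      Filter.limsup
        (E.rate fun n => {ω | E.hitT l ((n : ℝ) * k') ω ≤ (n : ℕ∞) ∧
          E.hitT l ((n : ℝ) * k') ω ≤ E.D1 l ω}) Filter.atTop) ∧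
    Filter.liminf
        (E.rate fun n => {ω | E.hitT l ((n : ℝ) * k) ω ≤ (n : ℕ∞) ∧
          E.hitT l ((n : ℝ) * k) ω ≤ E.D1 l ω}) Filter.atTop ≤
      Filter.liminf
        (E.rate fun n => {ω | E.hitT l ((n : ℝ) * k) ω ≤ (n : ℕ∞)}) Filter.atTop :=
  rate_comparison_no_backtrack_general E l k k' hkk
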